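/- Let E be a 2-dimensional real vector space, F an n-dimensional real vector space, α₁, α₂ ∈ F* linearly independent, and X = e₁⊗α₁ + e₂⊗α₂ for a basis {e₁,e₂} of E. Consider the map σ_X : E ⊗ Λ^{n-1}F* → S²E ⊗ Λ^nF* given by σ_X(e ⊗ φ) = (e∨e₁) ⊗ (α₁∧φ) + (e∨e₂) ⊗ (α₂∧φ). Then σ_X is surjective. -/

import Mathlib

/-!
Extend `α₁, α₂` to a basis `α₁, α₂, ψ` of `F*`. The top wedge `Ω = α₁ ∧ α₂ ∧ ψ` spans the line
`Λⁿ F*`, and since `α ∧ α = 0`, feeding `e ⊗ (α₂ ∧ ψ)` and `e ⊗ (α₁ ∧ ψ)` into `σ_X` kills one of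
the two terms: the image contains `(e ∨ e₁) ⊗ Ω` and `-(e ∨ e₂) ⊗ Ω` for every `e`. These span the
target, because `S²E` is spanned by the products `e ∨ eᵢ`.
-/

open TensorProduct

noncomputable section

variable (K : Type) [Field K] (V : Type) [AddCommGroup V] [Module K V]

def SymRel (n : ℕ) : Submodule K (⨂[K]^n V) :=
  Submodule.span K {x | ∃ (σ : Equiv.Perm (Fin n)) (t : ⨂[K]^n V),
    x = PiTensorProduct.reindex K (fun _ => V) σ t - t}

/-- The `n`-th symmetric power `S^n V`, as a quotient of the `n`-th tensor power. -/
def SymPow (n : ℕ) : Type := (⨂[K]^n V) ⧸ SymRel K V n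

instance (n : ℕ) : AddCommGroup (SymPow K V n) :=
  inferInstanceAs (AddCommGroup ((⨂[K]^n V) ⧸ SymRel K V n))
instance (n : ℕ) : Module K (SymPow K V n) :=
  inferInstanceAs (Module K ((⨂[K]^n V) ⧸ SymRel K V n))

/-- The symmetric product `v 0 ∨ ⋯ ∨ v (n-1)` in the symmetric power. -/
def SymPow.mk {n : ℕ} (v : Fin n → V) : SymPow K V n :=
  Submodule.Quotient.mk (PiTensorProduct.tprod K v)

/-- The wedge `v 0 ∧ ⋯ ∧ v (n-1)` as an element of the `n`-th exterior power. -/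
def wedgeMk {n : ℕ} (v : Fin n → V) : ⋀[K]^n V :=
  ⟨ExteriorAlgebra.ιMulti K n v, ExteriorAlgebra.ιMulti_range K n ⟨v, rfl⟩⟩

theorem wedgeMk_eq_ιMulti {n : ℕ} (v : Fin n → V) : wedgeMk K V v = exteriorPower.ιMulti K n v :=
  rfl

namespace AlternatingMap

variable {R M N : Type*} [CommRing R] [AddCommGroup M] [Module R M] [AddCommGroup N] [Module R N]
  {n : ℕ} (f : M [⋀^Fin (n + 2)]→ₗ[R] N)

theorem map_cons_cons_self (x : M) (ψ : Fin n → M) : f (Fin.cons x (Fin.cons x ψ)) = 0 :=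
  f.map_eq_zero_of_eq _ (i := 0) (j := 1) rfl (by simp)

theorem map_cons_cons_swap (x y : M) (ψ : Fin n → M) :
    f (Fin.cons y (Fin.cons x ψ)) = -f (Fin.cons x (Fin.cons y ψ)) := by
  have hswap : (Fin.cons y (Fin.cons x ψ) : Fin (n + 2) → M) =
      Fin.cons x (Fin.cons y ψ) ∘ Equiv.swap 0 1 := by
    ext i
    rcases Fin.eq_zero_or_eq_succ i with rfl | ⟨j, rfl⟩
    · rfl
    rcases Fin.eq_zero_or_eq_succ j with rfl | ⟨k, rfl⟩
    · rfl
    · rw [Function.comp_apply, Equiv.swap_apply_of_ne_of_ne] <;>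
        simp [Fin.succ_ne_zero, Fin.succ_succ_ne_one]
  rw [hswap, f.map_swap _ (by simp)]

end AlternatingMap

namespace exteriorPower

variable {R M : Type*} [CommRing R] [AddCommGroup M] [Module R M] {n : ℕ}

theorem ιMulti_eq_det_smul (β : Module.Basis (Fin n) R M) (v : Fin n → M) :
    ιMulti R n v = β.det v • ιMulti R n β := by
  suffices ιMulti R n = β.det.smulRight (ιMulti R n β) by
    simpa using DFunLike.congr_fun this v
  refine β.ext_alternating fun i hi => ?_
  let σ : Equiv.Perm (Fin n) := Equiv.ofBijective i (Finite.injective_iff_bijective.1 hi)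
  change ιMulti R n (β ∘ σ) = β.det.smulRight (ιMulti R n β) (β ∘ σ)
  simp [AlternatingMap.map_perm, Module.Basis.det_self]

theorem span_ιMulti_basis (β : Module.Basis (Fin n) R M) :
    Submodule.span R {ιMulti R n β} = ⊤ := by
  rw [eq_top_iff, ← ιMulti_span, Submodule.span_le]
  rintro _ ⟨v, rfl⟩
  rw [ιMulti_eq_det_smul β v]
  exact Submodule.smul_mem _ _ (Submodule.subset_span rfl)

end exteriorPower

theorem exists_linearIndependent_cons_cons {K V : Type*} [DivisionRing K] [AddCommGroup V]
    [Module K V] {x y : V} (hxy : LinearIndependent K ![x, y]) :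
    ∀ {k : ℕ}, k + 2 ≤ Module.finrank K V →
      ∃ ψ : Fin k → V, LinearIndependent K (Fin.cons x (Fin.cons y ψ) : Fin (k + 2) → V)
  | 0, _ => ⟨![], hxy⟩
  | k + 1, hk => by
    obtain ⟨ψ, hψ⟩ := exists_linearIndependent_cons_cons hxy (k := k) (by omega)
    obtain ⟨z, hz⟩ := exists_linearIndependent_snoc_of_lt_finrank hψ (by omega)
    refine ⟨Fin.snoc ψ z, ?_⟩
    rwa [Fin.cons_snoc_eq_snoc_cons, Fin.cons_snoc_eq_snoc_cons]

theorem TensorProduct.span_image2_tmul_eq_top {R M N : Type*} [CommRing R] [AddCommGroup M]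
    [Module R M] [AddCommGroup N] [Module R N] {s : Set M} {t : Set N}
    (hs : Submodule.span R s = ⊤) (ht : Submodule.span R t = ⊤) :
    Submodule.span R (Set.image2 (· ⊗ₜ[R] ·) s t) = ⊤ := by
  rw [← map₂_mk_top_top_eq_top, ← hs, ← ht, Submodule.map₂_span_span]
  rfl

namespace SymPow

def mkMultilinear (n : ℕ) : MultilinearMap K (fun _ : Fin n => V) (SymPow K V n) :=
  (SymRel K V n).mkQ.compMultilinearMap (PiTensorProduct.tprod K)

theorem mkMultilinear_apply {n : ℕ} (v : Fin n → V) : mkMultilinear K V n v = SymPow.mk K V v :=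
  rfl

theorem span_range_mk (n : ℕ) : Submodule.span K (Set.range (SymPow.mk K V (n := n))) = ⊤ := by
  let q : (⨂[K]^n V) →ₗ[K] SymPow K V n := (SymRel K V n).mkQ
  have hrange : Set.range (SymPow.mk K V (n := n)) = q '' Set.range (PiTensorProduct.tprod K) := by
    rw [← Set.range_comp]; rfl
  rw [hrange, Submodule.span_image, PiTensorProduct.span_tprod_eq_top, Submodule.map_top,
    LinearMap.range_eq_top]
  exact Submodule.mkQ_surjective _

theorem span_mk_pair_basis {ι : Type*} (b : Module.Basis ι K V) :
    Submodule.span K (Set.range fun p : V × ι => SymPow.mk K V ![p.1, b p.2]) = ⊤ := by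
  rw [eq_top_iff, ← span_range_mk, Submodule.span_le]
  rintro _ ⟨v, rfl⟩
  let L := (mkMultilinear K V 2).toLinearMap v 1
  have hL : ∀ x, L x = SymPow.mk K V ![v 0, x] := fun x => by
    simp only [L, MultilinearMap.toLinearMap_apply, mkMultilinear_apply]
    congr 1; ext j; fin_cases j <;> rfl
  have hv : SymPow.mk K V v = L (v 1) := by
    rw [hL]; congr 1; ext j; fin_cases j <;> rfl
  have hv1 : v 1 ∈ Submodule.span K (Set.range b) := b.span_eq ▸ Submodule.mem_top
  rw [hv]
  refine Submodule.span_mono ?_ (Submodule.span_image L ▸ Submodule.mem_map_of_mem hv1)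
  rintro _ ⟨_, ⟨i, rfl⟩, rfl⟩
  exact ⟨(v 0, i), (hL _).symm⟩

end SymPow

/-- Let `E` be a 2-dimensional real vector space with basis `{e₁,e₂}`,
`F` an `n`-dimensional real vector space (`n = p + 1`), and `α₁, α₂ ∈ F*` linearly
independent.  The map `σ_X : E ⊗ Λ^{n-1}F* → S²E ⊗ Λ^nF*` given by
`σ_X(e ⊗ φ) = (e∨e₁) ⊗ (α₁∧φ) + (e∨e₂) ⊗ (α₂∧φ)` is surjective. -/
theorem stmt_3 (E F : Type) [AddCommGroup E] [Module ℝ E] [AddCommGroup F] [Module ℝ F]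
    (b : Module.Basis (Fin 2) ℝ E)
    (p : ℕ) [FiniteDimensional ℝ F] (hF : Module.finrank ℝ F = p + 1)
    (α₁ α₂ : Module.Dual ℝ F) (hind : LinearIndependent ℝ ![α₁, α₂])
    (σX : E ⊗[ℝ] (⋀[ℝ]^p (Module.Dual ℝ F)) →ₗ[ℝ]
      (SymPow ℝ E 2) ⊗[ℝ] (⋀[ℝ]^(p + 1) (Module.Dual ℝ F)))
    (hσX : ∀ (e : E) (φ : Fin p → Module.Dual ℝ F),
      σX (e ⊗ₜ[ℝ] wedgeMk ℝ (Module.Dual ℝ F) φ) =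
        SymPow.mk ℝ E ![e, b 0] ⊗ₜ[ℝ] wedgeMk ℝ (Module.Dual ℝ F) (Fin.cons α₁ φ)
        + SymPow.mk ℝ E ![e, b 1] ⊗ₜ[ℝ] wedgeMk ℝ (Module.Dual ℝ F) (Fin.cons α₂ φ)) :
    Function.Surjective σX := by
  have hdual : Module.finrank ℝ (Module.Dual ℝ F) = p + 1 := by
    rw [Subspace.dual_finrank_eq, hF]
  obtain ⟨q, rfl⟩ : ∃ q, p = q + 1 := Nat.exists_eq_add_one.2 <| by
    have := hind.fintype_card_le_finrank
    simp only [Fintype.card_fin, hdual] at this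
    omega
  obtain ⟨ψ, hψ⟩ := exists_linearIndependent_cons_cons hind (k := q) hdual.ge
  let β := basisOfLinearIndependentOfCardEqFinrank hψ (by simp [hdual])
  simp only [wedgeMk_eq_ιMulti] at hσX
  have hmem : ∀ e i, SymPow.mk ℝ E ![e, b i] ⊗ₜ[ℝ] exteriorPower.ιMulti ℝ _ β ∈
      LinearMap.range σX := by
    intro e i
    rw [coe_basisOfLinearIndependentOfCardEqFinrank]
    fin_cases i
    · refine ⟨e ⊗ₜ exteriorPower.ιMulti ℝ _ (Fin.cons α₂ ψ), ?_⟩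
      rw [hσX, AlternatingMap.map_cons_cons_self, tmul_zero, add_zero]
      rfl
    · refine ⟨-(e ⊗ₜ exteriorPower.ιMulti ℝ _ (Fin.cons α₁ ψ)), ?_⟩
      rw [map_neg, hσX, AlternatingMap.map_cons_cons_self, AlternatingMap.map_cons_cons_swap,
        tmul_zero, zero_add, tmul_neg, neg_neg]
      rfl
  rw [← LinearMap.range_eq_top, eq_top_iff, ← TensorProduct.span_image2_tmul_eq_top
    (SymPow.span_mk_pair_basis ℝ E b) (exteriorPower.span_ιMulti_basis β), Submodule.span_le]
  rintro _ ⟨_, ⟨⟨e, i⟩, rfl⟩, _, rfl, rfl⟩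
  exact hmem e i
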